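/- arXiv:0903.2849 — 3 statements merged into one kernel-verified Lean document; each statement's English description precedes it below -/
import Mathlib

section
/- In any commutative Hopf algebra H, if I is an ideal satisfying \Delta(I) \subseteq I \otimes H + H \otimes I and \epsilon(I) = 0, then S(I) \subseteq I; that is, every biideal of a commutative Hopf algebra is automatically a Hopf ideal. -/
/-!
Let `A = H ⧸ I`, `π : H → A` the quotient map and `σ = π ∘ S`, so that `σ * π = 1` for the
convolution product. An `A`-point `f` of `H` acts on `A ⊗ H` by the `A`-linear translation
`1 ⊗ h ↦ ∑ f h₁ ⊗ h₂`; translations compose by convolution, so translation by `π` has right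
inverse translation by `σ`. Translation by `π` preserves `A ⊗ I` because `I` is a coideal killed
by `π`. A surjective endomorphism of a Noetherian module that preserves a submodule forces its
right inverse to preserve it too; by local finiteness of comodules this applies to a finitely
generated module over a finitely generated subalgebra of `A` containing `1 ⊗ x`. Hence
`σ`-translation maps `1 ⊗ x` into `A ⊗ I`, and applying `id ⊗ ε` gives `π (S x) = 0`.
(Geometrically: a closed submonoid of an affine group scheme is a subgroup.)
-/

open TensorProduct WithConv

open Function in
theorem Submodule.inf_le_comap_of_leftInverse {R M : Type*} [CommRing R] [IsNoetherianRing R]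
    [AddCommGroup M] [Module R M] {f g : M →ₗ[R] M} (hfg : LeftInverse f g)
    {J N : Submodule R M} (hN : N.FG) (hJ : J ≤ J.comap f) (hN' : N ≤ N.comap g) :
    N ⊓ J ≤ J.comap g := by
  have := isNoetherian_of_fg_of_noetherian N hN
  let V : ℕ →o Submodule R N :=
    ⟨fun n ↦ (J.comap (f ^ n)).comap N.subtype, monotone_nat_of_le_succ fun n m hm ↦ by
      simpa [pow_succ'] using hJ hm⟩
  obtain ⟨n, hn⟩ := monotone_stabilizes_iff_noetherian.mpr inferInstance V
  -- `u = g ^ (n + 1) m` has `f ^ (n + 1) u = m ∈ J`, so `u ∈ V (n + 1) = V n`,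
  -- i.e. `g m = f ^ n u ∈ J`.
  rintro m ⟨hmN, hmJ⟩
  have hu : (g ^ (n + 1)) m ∈ N := by
    simpa [Module.End.pow_apply] using
      (show Set.MapsTo g N N from fun _ h ↦ hN' h).iterate (n + 1) hmN
  have hmem : (⟨_, hu⟩ : N) ∈ V (n + 1) := by
    simpa [V, Module.End.pow_apply] using (hfg.iterate (n + 1) m).symm ▸ hmJ
  rw [← hn (n + 1) n.le_succ] at hmem
  simpa [V, Module.End.pow_apply, iterate_succ_apply, hfg.iterate n (g m)] using hmem

theorem Submodule.baseChange_le_ker_liftBaseChange {R M N : Type*} (A : Type*) [CommRing R]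
    [CommRing A] [Algebra R A] [AddCommGroup M] [Module R M] [AddCommGroup N] [Module R N]
    [Module A N] [IsScalarTower R A N] {V : Submodule R M} {l : M →ₗ[R] N}
    (hl : V ≤ LinearMap.ker l) : V.baseChange A ≤ LinearMap.ker (l.liftBaseChange A) := by
  rw [Submodule.baseChange_eq_span, Submodule.span_le]
  rintro _ ⟨v, hv, rfl⟩
  simpa using hl hv

theorem Coalgebra.exists_finset_comul_eq_sum {R C ι : Type*} [CommRing R] [AddCommGroup C]
    [Module R C] [Coalgebra R C] (b : Module.Basis ι R C) (x : C) :
    ∃ (s : Finset ι) (c : ι → C) (a : ι → ι → C), x ∈ Submodule.span R (c '' s) ∧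
      ∀ i ∈ s, comul (R := R) (c i) = ∑ j ∈ s, a i j ⊗ₜ c j := by
  classical
  -- With `Δ x = ∑ b j ⊗ d j`, counitality gives `x = ∑ ε (b j) • d j`, and coassociativity
  -- read off at the `i`-th coordinate gives `Δ (d i) = ∑ (coord i ⊗ id) (Δ (b j)) ⊗ d j`.
  obtain ⟨d, hd⟩ := TensorProduct.eq_repr_basis_left b (comul (R := R) x)
  refine ⟨d.support, d, fun i j ↦ TensorProduct.lid R C ((b.coord i).rTensor C (comul (b j))),
    ?_, fun i hi ↦ ?_⟩
  · have hx := congrArg (fun y ↦ TensorProduct.lid R C ((counit (R := R)).rTensor C y)) hd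
    simp only [Finsupp.sum, map_sum, LinearMap.rTensor_tmul, TensorProduct.lid_tmul,
      rTensor_counit_comul, one_smul] at hx
    rw [← hx]
    exact Submodule.sum_mem _ fun j hj ↦ Submodule.smul_mem _ _ (Submodule.subset_span ⟨j, hj, rfl⟩)
  · let Ψ : C ⊗[R] (C ⊗[R] C) →ₗ[R] C ⊗[R] C :=
      (TensorProduct.lid R (C ⊗[R] C)).toLinearMap ∘ₗ (b.coord i).rTensor (C ⊗[R] C)
    have hΨ : ∀ y z, Ψ (_root_.TensorProduct.assoc R C C C (y ⊗ₜ z)) =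
        TensorProduct.lid R C ((b.coord i).rTensor C y) ⊗ₜ z := by
      intro y z
      induction y using TensorProduct.induction_on with
      | zero => simp
      | add y y' hy hy' => simp only [add_tmul, map_add, hy, hy']
      | tmul u v => simp [Ψ, smul_tmul']
    have h := congrArg Ψ (coassoc_apply (R := R) x)
    simp only [← hd, Finsupp.sum, map_sum, LinearMap.rTensor_tmul, LinearMap.lTensor_tmul, hΨ] at h
    simpa [Ψ, Finsupp.single_apply, hi] using h.symm

namespace Coalgebra

variable {R C A : Type*} [CommRing R] [AddCommGroup C] [Module R C] [Coalgebra R C]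
  [CommRing A] [Algebra R A]

noncomputable def translate (f : WithConv (C →ₗ[R] A)) : A ⊗[R] C →ₗ[A] A ⊗[R] C :=
  (map f.ofConv LinearMap.id ∘ₗ comul).liftBaseChange A

theorem translate_tmul (f : WithConv (C →ₗ[R] A)) (a : A) (c : C) :
    translate f (a ⊗ₜ c) = a • map f.ofConv LinearMap.id (comul c) := rfl

theorem translate_comp (f g : WithConv (C →ₗ[R] A)) :
    translate f ∘ₗ translate g = translate (g * f) := by
  let Φ : C ⊗[R] (C ⊗[R] C) →ₗ[R] A ⊗[R] C :=
    map (LinearMap.mul' R A ∘ₗ map g.ofConv f.ofConv) LinearMap.id ∘ₗ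
      (_root_.TensorProduct.assoc R C C C).symm.toLinearMap
  have hl : ∀ x, translate f (map g.ofConv LinearMap.id x) = Φ (comul.lTensor C x) := by
    intro x
    induction x using TensorProduct.induction_on with
    | zero => simp
    | add x y hx hy => simp only [map_add, hx, hy]
    | tmul x y =>
      rw [map_tmul, translate_tmul, LinearMap.lTensor_tmul]
      induction comul (R := R) y using TensorProduct.induction_on with
      | zero => simp
      | add u v hu hv => simp only [map_add, smul_add, tmul_add, hu, hv]
      | tmul u v => simp [Φ, smul_tmul']
  have hr : ∀ x, map (g * f).ofConv LinearMap.id x =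
      Φ (_root_.TensorProduct.assoc R C C C (comul.rTensor C x)) := by
    intro x
    induction x using TensorProduct.induction_on with
    | zero => simp
    | add x y hx hy => simp only [map_add, hx, hy]
    | tmul x y => simp [Φ]
  ext c
  change translate f (translate g (1 ⊗ₜ c)) = translate (g * f) (1 ⊗ₜ c)
  rw [translate_tmul, translate_tmul, one_smul, one_smul, hl, hr, coassoc_apply]

@[simp]
theorem translate_one : translate (1 : WithConv (C →ₗ[R] A)) = LinearMap.id := by
  ext c
  change (1 : A) • map _ LinearMap.id (comul (R := R) c) = (1 : A) ⊗ₜ[R] c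
  rw [one_smul]
  change LinearMap.rTensor C (Algebra.linearMap R A ∘ₗ counit) (comul c) = _
  simp [LinearMap.rTensor_comp_apply]

theorem liftBaseChange_comp_translate (f g : WithConv (C →ₗ[R] A)) :
    g.ofConv.liftBaseChange A ∘ₗ translate f = (f * g).ofConv.liftBaseChange A := by
  ext c
  change g.ofConv.liftBaseChange A (translate f (1 ⊗ₜ c)) = (1 : A) • (f * g) c
  rw [translate_tmul, one_smul, one_smul, LinearMap.convMul_apply]
  induction comul (R := R) c using TensorProduct.induction_on with
  | zero => simp
  | add u v hu hv => simp only [map_add, hu, hv]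
  | tmul u v => simp

theorem eq_zero_of_translate_tmul_mem_baseChange {V : Submodule R C}
    (hV : ∀ v ∈ V, counit (R := R) v = 0) {f : WithConv (C →ₗ[R] A)} {x : C}
    (hx : translate f (1 ⊗ₜ x) ∈ V.baseChange A) : f x = 0 := by
  have := Submodule.baseChange_le_ker_liftBaseChange A
    (l := (1 : WithConv (C →ₗ[R] A)).ofConv) (fun v hv ↦ by simp [hV v hv]) hx
  rwa [LinearMap.mem_ker, ← LinearMap.comp_apply, liftBaseChange_comp_translate, mul_one,
    LinearMap.liftBaseChange_one_tmul] at this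

theorem translate_baseChange_le (V : Submodule R C) [V.IsCoideal] {f : WithConv (C →ₗ[R] A)}
    (hf : ∀ v ∈ V, f v = 0) : V.baseChange A ≤ (V.baseChange A).comap (translate f) := by
  have hfactor : V.mkQ.lTensor A ∘ₗ map f.ofConv LinearMap.id =
      map (V.liftQ f.ofConv hf) LinearMap.id ∘ₗ map V.mkQ V.mkQ := by
    ext; rfl
  refine (Submodule.baseChange_eq_span A V).trans_le (Submodule.span_le.2 ?_)
  rintro _ ⟨v, hv, rfl⟩
  have hker : LinearMap.lTensor A V.mkQ (translate f (1 ⊗ₜ v)) = 0 := by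
    rw [translate_tmul, one_smul, ← LinearMap.comp_apply, hfactor, LinearMap.comp_apply,
      Submodule.IsCoideal.map_mkQ_comul_eq_zero hv, map_zero]
  obtain ⟨w, hw⟩ :=
    (lTensor_exact A (LinearMap.exact_subtype_mkQ V) V.mkQ_surjective _).1 hker
  exact ⟨w, hw⟩

theorem exists_fg_translate_stable [IsNoetherianRing R] [Module.Free R C]
    (f : WithConv (C →ₗ[R] A)) (x : C) :
    ∃ (B : Subalgebra R A) (M : Submodule B (A ⊗[R] C)), IsNoetherianRing B ∧ M.FG ∧
      1 ⊗ₜ x ∈ M ∧ M ≤ M.comap ((translate f).restrictScalars B) := by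
  classical
  obtain ⟨s, c, a, hx, hc⟩ := exists_finset_comul_eq_sum (Module.Free.chooseBasis R C) x
  let B := Algebra.adjoin R (((s ×ˢ s).image fun p ↦ f (a p.1 p.2) : Finset A) : Set A)
  have hB : ∀ i ∈ s, ∀ j ∈ s, f (a i j) ∈ B := fun i hi j hj ↦
    Algebra.subset_adjoin (Finset.mem_coe.2 (Finset.mem_image.2 ⟨(i, j), by simp [hi, hj], rfl⟩))
  let M := Submodule.span B ((fun j ↦ (1 : A) ⊗ₜ[R] c j) '' s)
  refine ⟨B, M, isNoetherianRing_of_fg (Subalgebra.fg_adjoin_finset _),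
    Submodule.fg_span (s.finite_toSet.image _), ?_, Submodule.span_le.2 ?_⟩
  · have := Submodule.mem_map_of_mem (f := TensorProduct.mk R A C 1) hx
    rw [Submodule.map_span, Set.image_image] at this
    exact Submodule.span_le_restrictScalars R B _ this
  · rintro _ ⟨i, hi, rfl⟩
    change translate f (1 ⊗ₜ c i) ∈ M
    rw [translate_tmul, one_smul, hc i hi, map_sum]
    refine Submodule.sum_mem _ fun j hj ↦ ?_
    have := M.smul_mem ⟨_, hB i hi j hj⟩ (Submodule.subset_span ⟨j, hj, rfl⟩)
    rwa [Subalgebra.smul_def, smul_tmul', smul_eq_mul, mul_one] at this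

end Coalgebra

theorem AlgHom.comp_antipode_mul_self {R H A : Type*} [CommSemiring R] [Semiring H]
    [HopfAlgebra R H] [Semiring A] [Algebra R A] (φ : H →ₐ[R] A) :
    toConv (φ.toLinearMap ∘ₗ HopfAlgebra.antipode R) * toConv φ.toLinearMap = 1 := calc
  _ = toConv (φ.toLinearMap ∘ₗ
        (toConv (HopfAlgebra.antipode R) * toConv (LinearMap.id : H →ₗ[R] H)).ofConv) := by
    rw [LinearMap.algHom_comp_convMul_distrib]; rfl
  _ = 1 := by rw [LinearMap.antipode_mul_id]; ext; simp

/-- In a commutative Hopf algebra, every biideal (an ideal `I` with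
`Δ(I) ⊆ I ⊗ H + H ⊗ I` and `ε(I) = 0`) is automatically a Hopf ideal:
`S(I) ⊆ I`. -/
theorem biideal_is_hopf_ideal {k H : Type*} [Field k] [CommRing H]
    [HopfAlgebra k H] (I : Ideal H)
    (hΔ : ∀ x ∈ I, Coalgebra.comul (R := k) x ∈
        LinearMap.range (TensorProduct.map (I.restrictScalars k).subtype
            (LinearMap.id (R := k) (M := H))) ⊔
        LinearMap.range (TensorProduct.map (LinearMap.id (R := k) (M := H))
            (I.restrictScalars k).subtype))
    (hε : ∀ x ∈ I, Coalgebra.counit (R := k) x = 0) :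
    ∀ x ∈ I, HopfAlgebra.antipode (R := k) x ∈ I := by
  intro x hx
  have : (I.restrictScalars k).IsCoideal :=
    (Submodule.isCoideal_iff_comul_mem _).2 ⟨hε, fun y hy ↦ by rw [sup_comm]; exact hΔ y hy⟩
  let π : WithConv (H →ₗ[k] H ⧸ I) := toConv (Ideal.Quotient.mkₐ k I).toLinearMap
  let σ : WithConv (H →ₗ[k] H ⧸ I) :=
    toConv ((Ideal.Quotient.mkₐ k I).toLinearMap ∘ₗ HopfAlgebra.antipode k)
  have hinv : Coalgebra.translate π ∘ₗ Coalgebra.translate σ = LinearMap.id := by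
    rw [Coalgebra.translate_comp, AlgHom.comp_antipode_mul_self, Coalgebra.translate_one]
  have hπ : ∀ v ∈ I.restrictScalars k, π v = 0 := fun v hv ↦ Ideal.Quotient.eq_zero_iff_mem.2 hv
  obtain ⟨B, M, _, hMfg, hxM, hM⟩ := Coalgebra.exists_fg_translate_stable σ x
  have hσx : Coalgebra.translate σ (1 ⊗ₜ x) ∈ (I.restrictScalars k).baseChange (H ⧸ I) :=
    Submodule.inf_le_comap_of_leftInverse (R := B)
      (f := (Coalgebra.translate π).restrictScalars B)
      (g := (Coalgebra.translate σ).restrictScalars B)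
      (J := ((I.restrictScalars k).baseChange (H ⧸ I)).restrictScalars B)
      (LinearMap.congr_fun hinv) hMfg (fun y hy ↦ Coalgebra.translate_baseChange_le _ hπ hy) hM
      ⟨hxM, Submodule.tmul_mem_baseChange_of_mem (p := I.restrictScalars k) (1 : H ⧸ I) hx⟩
  exact Ideal.Quotient.eq_zero_iff_mem.1 (Coalgebra.eq_zero_of_translate_tmul_mem_baseChange hε hσx)
end

section
/- Let H be a graded connected commutative bialgebra over \mathbb{Q}, B_+ a degree-one Hochschild 1-cocycle, and X = 1 + g B_+(X Q^{2}) the unique solution of the Dyson–Schwinger equation with Q = X (toy case Q = X, i.e. X = 1 + g B_+(X^3)). Then the coefficients X_l generate a Hopf subalgebra: \Delta(X_l) is a sum of terms P \otimes X_j with j \le l and P a polynomial in X_1, ..., X_l. -/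
open TensorProduct

/-- The coefficientwise extension of a linear map `B : H → H` to `H[[g]]`. -/
noncomputable def seriesExt {H : Type*} [CommRing H] [Algebra ℚ H] (B : H →ₗ[ℚ] H)
    (f : PowerSeries H) : PowerSeries H :=
  PowerSeries.mk fun n => B (PowerSeries.coeff (R := H) n f)

/-!
Let `X = 1 + g B₊(X ^ (j + 1))`. Applying `Δ` coefficientwise gives a series `ΔX` in
`(H ⊗ H)[[g]]` which, by the cocycle identity, solves `Z = X ⊗ 1 + g (id ⊗ B₊)(Z ^ (j + 1))`,
and this equation determines `Z` coefficient by coefficient. The series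
`Y = ∑ₘ gᵐ X ^ (j m + 1) ⊗ Xₘ` solves it as well: `Y` is `X ⊗ 1` times the substitution
`g ↦ g X ^ j` into `1 ⊗ X`, substitution is multiplicative, and `id ⊗ B₊` only sees the right
factor, where `B₊` turns `X ^ (j + 1)` back into `(X - 1) / g`. Hence
`Δ Xₙ = ∑ₘ (X ^ (j m + 1))ₙ₋ₘ ⊗ Xₘ`, and the left factors are polynomials in `X₁, …, Xₙ`.
-/

section

open PowerSeries hiding map
open Algebra.TensorProduct (includeLeftRingHom includeRight)

section SeriesExt

variable {R : Type*} [CommRing R] [Algebra ℚ R]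

@[simp]
theorem coeff_seriesExt (Φ : R →ₗ[ℚ] R) (f : R⟦X⟧) (n : ℕ) :
    coeff n (seriesExt Φ f) = Φ (coeff n f) :=
  coeff_mk _ _

theorem X_pow_dvd_seriesExt_sub {Φ : R →ₗ[ℚ] R} {f g : R⟦X⟧} {n : ℕ} (h : X ^ n ∣ f - g) :
    X ^ n ∣ seriesExt Φ f - seriesExt Φ g := by
  refine X_pow_dvd_iff.2 fun m hm => ?_
  rw [map_sub, coeff_seriesExt, coeff_seriesExt, ← map_sub, ← map_sub,
    X_pow_dvd_iff.1 h m hm, map_zero]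

theorem eq_of_eq_add_X_mul_seriesExt_pow {Φ : R →ₗ[ℚ] R} {A Z₁ Z₂ : R⟦X⟧} {k : ℕ}
    (h₁ : Z₁ = A + X * seriesExt Φ (Z₁ ^ k)) (h₂ : Z₂ = A + X * seriesExt Φ (Z₂ ^ k)) :
    Z₁ = Z₂ := by
  have hdvd : ∀ n, X ^ n ∣ Z₁ - Z₂ := by
    intro n
    induction n with
    | zero => exact one_dvd _
    | succ n ih =>
      have hdiff : Z₁ - Z₂ = X * (seriesExt Φ (Z₁ ^ k) - seriesExt Φ (Z₂ ^ k)) := by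
        rw [mul_sub]
        linear_combination h₁ - h₂
      rw [hdiff, pow_succ']
      exact mul_dvd_mul_left X (X_pow_dvd_seriesExt_sub (ih.trans (sub_dvd_pow_sub_pow _ _ k)))
  ext n
  simpa [sub_eq_zero] using X_pow_dvd_iff.1 (hdvd (n + 1)) n n.lt_succ_self

end SeriesExt

theorem PowerSeries.coeff_subst_eq_sum_range {S : Type*} [CommRing S] {u : S⟦X⟧}
    (hu : constantCoeff u = 0) (f : S⟦X⟧) {n N : ℕ} (hn : n ≤ N) :
    coeff n (f.subst u) = ∑ d ∈ Finset.range (N + 1), coeff d f * coeff n (u ^ d) := by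
  rw [coeff_subst' (HasSubst.of_constantCoeff_zero' hu)]
  refine finsum_eq_sum_of_support_subset _ fun d hd => ?_
  rw [Finset.coe_range, Set.mem_Iio]
  by_contra! hNd
  have hud : X ^ d ∣ u ^ d := pow_dvd_pow_of_dvd (X_dvd_iff.2 hu) d
  exact hd (by simp only [X_pow_dvd_iff.1 hud n (by omega), smul_zero])

theorem PowerSeries.coeff_pow_mem_adjoin {K R : Type*} [CommSemiring K] [CommSemiring R]
    [Algebra K R] (f : R⟦X⟧) {k l : ℕ} (hk : k ≤ l) (r : ℕ) :
    coeff k (f ^ r) ∈ Algebra.adjoin K {h : R | ∃ i ≤ l, h = coeff i f} := by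
  induction r generalizing k with
  | zero =>
    rw [pow_zero, coeff_one]
    split_ifs
    exacts [one_mem _, zero_mem _]
  | succ r ih =>
    rw [pow_succ, coeff_mul]
    refine Subalgebra.sum_mem _ fun p hp => mul_mem (ih ?_) (Algebra.subset_adjoin ⟨p.2, ?_, rfl⟩)
    · exact (Finset.HasAntidiagonal.antidiagonal.fst_le hp).trans hk
    · exact (Finset.HasAntidiagonal.antidiagonal.snd_le hp).trans hk

namespace DysonSchwinger

section TensorSeries

variable {H : Type*} [CommRing H] [Algebra ℚ H]

/-- `∑ₘ gᵐ f ^ (j m + a) ⊗ Fₘ`, written as the substitution `g ↦ g f ^ j` into `1 ⊗ F` so that it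
is visibly multiplicative in `F`. -/
noncomputable def tensorSeries (f : H⟦X⟧) (j a : ℕ) (F : H⟦X⟧) : (H ⊗[ℚ] H)⟦X⟧ :=
  PowerSeries.map (includeLeftRingHom (R := ℚ)) (f ^ a) *
    (PowerSeries.map (includeRight (R := ℚ) (A := H)).toRingHom F).subst
      (PowerSeries.map (includeLeftRingHom (R := ℚ)) (X * f ^ j))

theorem coeff_tensorSeries (f : H⟦X⟧) (j a : ℕ) (F : H⟦X⟧) (n : ℕ) :
    coeff n (tensorSeries f j a F) =
      ∑ m ∈ Finset.range (n + 1), coeff (n - m) (f ^ (j * m + a)) ⊗ₜ[ℚ] coeff m F := by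
  have hsubst : ∀ q ≤ n,
      coeff q ((PowerSeries.map (includeRight (R := ℚ) (A := H)).toRingHom F).subst
          (PowerSeries.map (includeLeftRingHom (R := ℚ)) (X * f ^ j))) =
        ∑ m ∈ Finset.range (n + 1),
          includeLeftRingHom (coeff q ((X * f ^ j) ^ m)) * includeRight (coeff m F) := by
    intro q hq
    rw [coeff_subst_eq_sum_range (by simp) _ hq]
    refine Finset.sum_congr rfl fun m _ => ?_
    rw [← map_pow, coeff_map, coeff_map, mul_comm]
    rfl
  rw [tensorSeries, coeff_mul, Finset.sum_congr rfl fun pq hpq => by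
    rw [hsubst pq.2 (Finset.HasAntidiagonal.antidiagonal.snd_le hpq), Finset.mul_sum],
    Finset.sum_comm]
  refine Finset.sum_congr rfl fun m hm => ?_
  have hcoeff : coeff n (f ^ a * (X * f ^ j) ^ m) = coeff (n - m) (f ^ (j * m + a)) := by
    rw [show f ^ a * (X * f ^ j) ^ m = X ^ m * f ^ (j * m + a) by ring, coeff_X_pow_mul',
      if_pos (Finset.mem_range_succ_iff.1 hm)]
  rw [← hcoeff, coeff_mul, TensorProduct.sum_tmul]
  refine Finset.sum_congr rfl fun pq _ => ?_
  simp only [coeff_map, Algebra.TensorProduct.includeLeftRingHom_apply,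
    Algebra.TensorProduct.includeRight_apply, Algebra.TensorProduct.tmul_mul_tmul, mul_one,
    one_mul]

theorem hasSubst_map_includeLeft_X_mul (f : H⟦X⟧) (j : ℕ) :
    HasSubst (PowerSeries.map (includeLeftRingHom (R := ℚ) (B := H)) (X * f ^ j)) :=
  HasSubst.of_constantCoeff_zero' (by simp)

theorem tensorSeries_pow (f : H⟦X⟧) (j a : ℕ) (F : H⟦X⟧) (k : ℕ) :
    tensorSeries f j a F ^ k = tensorSeries f j (a * k) (F ^ k) := by
  rw [tensorSeries, tensorSeries, mul_pow, ← map_pow, ← pow_mul,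
    ← subst_pow (hasSubst_map_includeLeft_X_mul f j), ← map_pow]

theorem tensorSeries_one_add_X_mul (f : H⟦X⟧) (j a : ℕ) (G : H⟦X⟧) :
    tensorSeries f j a (1 + X * G) =
      PowerSeries.map (includeLeftRingHom (R := ℚ)) (f ^ a) + X * tensorSeries f j (a + j) G := by
  rw [tensorSeries, tensorSeries, ← coe_substAlgHom (hasSubst_map_includeLeft_X_mul f j)]
  simp only [map_add, map_one, map_mul, map_X, map_pow, substAlgHom_X]
  ring

theorem seriesExt_lTensor_tensorSeries (B : H →ₗ[ℚ] H) (f : H⟦X⟧) (j a : ℕ) (F : H⟦X⟧) :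
    seriesExt (B.lTensor H) (tensorSeries f j a F) = tensorSeries f j a (seriesExt B F) := by
  ext n
  simp only [coeff_seriesExt, coeff_tensorSeries, map_sum, LinearMap.lTensor_tmul]

end TensorSeries

section Bialgebra

variable {H : Type*} [CommRing H] [Bialgebra ℚ H] {B : H →ₗ[ℚ] H}

theorem map_comul_eq_add_X_mul
    (hB : ∀ x : H, Coalgebra.comul (R := ℚ) (B x) = B x ⊗ₜ[ℚ] 1 + B.lTensor H (Coalgebra.comul x))
    {f : H⟦X⟧} {k : ℕ} (hf : f = 1 + X * seriesExt B (f ^ k)) :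
    PowerSeries.map (Bialgebra.comulAlgHom ℚ H).toRingHom f =
      PowerSeries.map (includeLeftRingHom (R := ℚ)) f + X * seriesExt (B.lTensor H)
        (PowerSeries.map (Bialgebra.comulAlgHom ℚ H).toRingHom f ^ k) := by
  ext (_ | n)
  · have hf₀ : coeff 0 f = 1 := by rw [hf]; simp
    rw [map_add, coeff_map, coeff_map, coeff_zero_X_mul, hf₀, map_one, map_one, add_zero]
  · have hf_succ : coeff (n + 1) f = B (coeff n (f ^ k)) := by
      conv_lhs => rw [hf]
      simp
    rw [map_add, coeff_map, coeff_map, coeff_succ_X_mul, coeff_seriesExt, ← map_pow, coeff_map,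
      hf_succ]
    exact hB _

theorem comul_coeff_eq_sum
    (hB : ∀ x : H, Coalgebra.comul (R := ℚ) (B x) = B x ⊗ₜ[ℚ] 1 + B.lTensor H (Coalgebra.comul x))
    {f : H⟦X⟧} {j : ℕ} (hf : f = 1 + X * seriesExt B (f ^ (j + 1))) (n : ℕ) :
    Coalgebra.comul (R := ℚ) (coeff n f) =
      ∑ m ∈ Finset.range (n + 1), coeff (n - m) (f ^ (j * m + 1)) ⊗ₜ[ℚ] coeff m f := by
  have hsol : tensorSeries f j 1 f = PowerSeries.map (includeLeftRingHom (R := ℚ)) f +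
      X * seriesExt (B.lTensor H) (tensorSeries f j 1 f ^ (j + 1)) := by
    calc tensorSeries f j 1 f = tensorSeries f j 1 (1 + X * seriesExt B (f ^ (j + 1))) := by
          rw [← hf]
      _ = _ := by
          rw [tensorSeries_one_add_X_mul, pow_one, ← seriesExt_lTensor_tensorSeries,
            tensorSeries_pow, one_mul, add_comm 1 j]
  have hcomul : PowerSeries.map (Bialgebra.comulAlgHom ℚ H).toRingHom f = tensorSeries f j 1 f :=
    eq_of_eq_add_X_mul_seriesExt_pow (map_comul_eq_add_X_mul hB hf) hsol
  have hcoeff := congrArg (coeff n) hcomul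
  rwa [coeff_map, coeff_tensorSeries] at hcoeff

end Bialgebra

end DysonSchwinger

end

theorem dyson_schwinger_hopf_subalgebra_general {H : Type*} [CommRing H] [Bialgebra ℚ H]
    (B : H →ₗ[ℚ] H)
    (hBcocycle : ∀ x : H, Coalgebra.comul (R := ℚ) (B x)
        = (B x) ⊗ₜ[ℚ] 1 + (TensorProduct.map LinearMap.id B) (Coalgebra.comul (R := ℚ) x))
    (X : PowerSeries H)
    (hXeq : X = 1 + PowerSeries.X * seriesExt B (X ^ 3)) :
    ∀ l : ℕ, Coalgebra.comul (R := ℚ) (PowerSeries.coeff (R := H) l X) ∈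
      LinearMap.range (TensorProduct.map
        (Subalgebra.toSubmodule
          (Algebra.adjoin ℚ {h : H | ∃ i ≤ l, h = PowerSeries.coeff (R := H) i X})).subtype
        (Submodule.span ℚ {h : H | ∃ j ≤ l, h = PowerSeries.coeff (R := H) j X}).subtype) := by
  intro l
  rw [DysonSchwinger.comul_coeff_eq_sum (j := 2) hBcocycle hXeq, TensorProduct.range_mapIncl]
  refine Submodule.sum_mem _ fun m hm => Submodule.apply_mem_map₂ _ ?_ ?_
  · exact PowerSeries.coeff_pow_mem_adjoin X (by omega) _
  · exact Submodule.subset_span ⟨m, Finset.mem_range_succ_iff.1 hm, rfl⟩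

/-- For a graded connected commutative bialgebra `H` over `ℚ`, a
degree-one Hochschild 1-cocycle `B₊`, and the solution `X = 1 + g B₊(X³)` of the
Dyson–Schwinger equation (toy case `Q = X`), the coefficients `X_l` generate a Hopf
subalgebra: each `Δ(X_l)` is a sum of terms `P ⊗ X_j` with `j ≤ l` and `P` a
polynomial in the `X_i`, `i ≤ l`. -/
theorem dyson_schwinger_hopf_subalgebra {H : Type*} [CommRing H] [Bialgebra ℚ H]
    (ℋ : ℕ → Submodule ℚ H)
    (hdirect : DirectSum.IsInternal ℋ)
    (h0 : ℋ 0 = (1 : Submodule ℚ H))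
    (hmul : ∀ (p q : ℕ) (a b : H), a ∈ ℋ p → b ∈ ℋ q → a * b ∈ ℋ (p + q))
    (B : H →ₗ[ℚ] H)
    (hBdeg : ∀ n : ℕ, ∀ x ∈ ℋ n, B x ∈ ℋ (n + 1))
    (hBcocycle : ∀ x : H, Coalgebra.comul (R := ℚ) (B x)
        = (B x) ⊗ₜ[ℚ] 1 + (TensorProduct.map LinearMap.id B) (Coalgebra.comul (R := ℚ) x))
    (X : PowerSeries H)
    (hX0 : PowerSeries.constantCoeff (R := H) X = 1)
    (hXg : ∀ l : ℕ, PowerSeries.coeff (R := H) l X ∈ ℋ l)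
    (hXeq : X = 1 + PowerSeries.X * seriesExt B (X ^ 3)) :
    ∀ l : ℕ, Coalgebra.comul (R := ℚ) (PowerSeries.coeff (R := H) l X) ∈
      LinearMap.range (TensorProduct.map
        (Subalgebra.toSubmodule
          (Algebra.adjoin ℚ {h : H | ∃ i ≤ l, h = PowerSeries.coeff (R := H) i X})).subtype
        (Submodule.span ℚ {h : H | ∃ j ≤ l, h = PowerSeries.coeff (R := H) j X}).subtype) :=
  dyson_schwinger_hopf_subalgebra_general B hBcocycle X hXeq
end

section
/- In the core Hopf algebra, every primitive generator has exactly one loop: a 1PI graph \Gamma with loop number L(\Gamma) \ge 2 contains a proper nonempty 1PI subgraph, hence has nonvanishing reduced coproduct. -/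
open scoped TensorProduct

/-- A Feynman graph: a finite set of vertices and of (labels of) internal edges,
with an endpoint assignment for edges and a number of external legs at each vertex. -/
structure FeynGraph where
  verts : Finset ℕ
  edges : Finset ℕ
  ends : ℕ → ℕ × ℕ
  extLegs : ℕ → ℕ
  wf : ∀ e ∈ edges, (ends e).1 ∈ verts ∧ (ends e).2 ∈ verts

namespace FeynGraph

/-- Two vertices are connected through the edge set `F`. -/
def conn (G : FeynGraph) (F : Finset ℕ) (a b : ℕ) : Prop :=
  Relation.ReflTransGen (fun x y => ∃ e ∈ F, G.ends e = (x, y) ∨ G.ends e = (y, x)) a b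

/-- A graph is connected if all its vertices are joined through its edges. -/
def Connected (G : FeynGraph) : Prop :=
  ∀ a ∈ G.verts, ∀ b ∈ G.verts, G.conn G.edges a b

/-- Deletion of a single internal edge. -/
def deleteEdge (G : FeynGraph) (e : ℕ) : FeynGraph :=
  { verts := G.verts, edges := G.edges.erase e, ends := G.ends, extLegs := G.extLegs,
    wf := fun f hf => G.wf f (Finset.mem_of_mem_erase hf) }

/-- One-particle irreducible: connected, not a tree (it has an internal edge and stays
connected), and still connected after deleting any single internal edge. -/
def OnePI (G : FeynGraph) : Prop :=
  G.Connected ∧ G.edges.Nonempty ∧ ∀ e ∈ G.edges, (G.deleteEdge e).Connected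

open scoped Classical in
/-- The vertices touched by the edge set `F`. -/
noncomputable def touched (G : FeynGraph) (F : Finset ℕ) : Finset ℕ :=
  G.verts.filter fun v => ∃ e ∈ F ∩ G.edges, (G.ends e).1 = v ∨ (G.ends e).2 = v

open scoped Classical in
/-- The subgraph of `G` spanned by the edge set `F`. -/
noncomputable def restrict (G : FeynGraph) (F : Finset ℕ) : FeynGraph where
  verts := G.touched F
  edges := F ∩ G.edges
  ends := G.ends
  extLegs := fun _ => 0
  wf := by
    intro e he
    have h1 := G.wf e (Finset.mem_inter.mp he).2
    constructor
    · exact Finset.mem_filter.mpr ⟨h1.1, ⟨e, he, Or.inl rfl⟩⟩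
    · exact Finset.mem_filter.mpr ⟨h1.2, ⟨e, he, Or.inr rfl⟩⟩

open scoped Classical in
/-- The edges of the connected component of the vertex `v` inside the edge set `F`. -/
noncomputable def compEdges (G : FeynGraph) (F : Finset ℕ) (v : ℕ) : Finset ℕ :=
  (F ∩ G.edges).filter fun e => G.conn F v (G.ends e).1

/-- The connected component of `v` in the subgraph spanned by `F`. -/
noncomputable def component (G : FeynGraph) (F : Finset ℕ) (v : ℕ) : FeynGraph :=
  G.restrict (G.compEdges F v)

open scoped Classical in
/-- The canonical (minimal) representative of the `F`-connected component of `v`. -/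
noncomputable def rep (G : FeynGraph) (F : Finset ℕ) (v : ℕ) : ℕ :=
  if h : (G.verts.filter fun w => G.conn F v w).Nonempty
  then (G.verts.filter fun w => G.conn F v w).min' h else v

/-- Contraction `G/F`: each connected component of the subgraph spanned by `F` is
shrunk to a single vertex. -/
noncomputable def contract (G : FeynGraph) (F : Finset ℕ) : FeynGraph where
  verts := G.verts.image (G.rep F)
  edges := G.edges \ F
  ends := fun e => (G.rep F (G.ends e).1, G.rep F (G.ends e).2)
  extLegs := G.extLegs
  wf := by
    intro e he
    have h1 := G.wf e (Finset.mem_sdiff.mp he).1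
    exact ⟨Finset.mem_image_of_mem _ h1.1, Finset.mem_image_of_mem _ h1.2⟩

/-- A good subgraph: a nonempty proper subset of the edges, all of whose connected
components are one-particle irreducible. -/
def GoodSub (G : FeynGraph) (F : Finset ℕ) : Prop :=
  F ⊆ G.edges ∧ F.Nonempty ∧ F ≠ G.edges ∧
    ∀ v ∈ (G.restrict F).verts, OnePI (G.component F v)

open scoped Classical in
/-- The finite set of good subgraphs (disjoint unions of 1PI proper subgraphs). -/
noncomputable def subFinset (G : FeynGraph) : Finset (Finset ℕ) :=
  G.edges.powerset.filter fun F => G.GoodSub F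

/-- Canonical representatives of the connected components of the subgraph spanned
by `F`. -/
noncomputable def compReps (G : FeynGraph) (F : Finset ℕ) : Finset ℕ :=
  (G.restrict F).verts.image (G.rep F)

/-- The number of connected components of a graph. -/
noncomputable def comps (G : FeynGraph) : ℕ := (G.verts.image (G.rep G.edges)).card

/-- The loop number `L = I - V + c` of a graph. -/
noncomputable def loopNum (G : FeynGraph) : ℤ :=
  (G.edges.card : ℤ) - (G.verts.card : ℤ) + (G.comps : ℤ)

end FeynGraph

/-- The core Hopf algebra: the free commutative algebra over `ℂ` on Feynman graphs. -/
noncomputable abbrev CoreAlg := MvPolynomial FeynGraph ℂ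

open MvPolynomial in
/-- The monomial of subgraph components: the product of the 1PI connected components
of the subgraph spanned by `F`. -/
noncomputable def subPoly (G : FeynGraph) (F : Finset ℕ) : CoreAlg :=
  ∏ v ∈ G.compReps F, X (G.component F v)

open MvPolynomial in
/-- The core coproduct `Δ(Γ) = Γ ⊗ 1 + 1 ⊗ Γ + ∑_{∅ ⊊ γ ⊊ Γ} γ ⊗ Γ/γ`, extended to
the free commutative algebra as an algebra homomorphism. -/
noncomputable def coreCoproduct : CoreAlg →ₐ[ℂ] CoreAlg ⊗[ℂ] CoreAlg :=
  aeval fun Γ : FeynGraph =>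
    (X Γ) ⊗ₜ[ℂ] 1 + 1 ⊗ₜ[ℂ] (X Γ) +
      ∑ F ∈ Γ.subFinset, (subPoly Γ F) ⊗ₜ[ℂ] (X (Γ.contract F))

open MvPolynomial in
/-- The counit of the core Hopf algebra: it kills every generator. -/
noncomputable def coreCounit : CoreAlg →ₐ[ℂ] ℂ := aeval fun _ : FeynGraph => 0

/-! The candidates are nonempty edge sets `F` that are connected and have at least as many
edges as touched vertices (loop number `≥ 1`). An inclusion-minimal candidate is
2-edge-connected: if deleting `e ∈ F` disconnected it, the `|F| - 1 ≥ |V(F)| - 1` remaining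
edges would be spread over at least two components, so one component would again have at
least as many edges as vertices, a smaller candidate. Deleting any edge of a minimal
candidate therefore leaves a connected graph, which by minimality is no candidate; hence
`|F| = |V(F)| ≤ |V(Γ)| < |E(Γ)|`, and `F` is a proper 1PI subgraph of `Γ`. -/

open Finset

theorem Finset.exists_card_filter_le_card_filter {α β γ : Type*} [DecidableEq γ]
    (s : Finset α) (t : Finset β) (f : α → γ) (g : β → γ)
    (hg : ∀ b ∈ t, g b ∈ s.image f) (hcard : #s < #t + #(s.image f)) :
    ∃ r ∈ s.image f, #{a ∈ s | f a = r} ≤ #{b ∈ t | g b = r} := by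
  have hsum :
      ∑ r ∈ s.image f, #{a ∈ s | f a = r} < ∑ r ∈ s.image f, (#{b ∈ t | g b = r} + 1) := by
    rwa [← card_eq_sum_card_image, sum_add_distrib, ← card_eq_sum_card_fiberwise hg,
      sum_const, smul_eq_mul, mul_one]
  obtain ⟨r, hr, hlt⟩ := exists_lt_of_sum_lt hsum
  exact ⟨r, hr, Nat.le_of_lt_succ hlt⟩

namespace FeynGraph

open scoped Classical

variable (G : FeynGraph)

theorem mem_verts_of_ends_eq {e a b : ℕ} (he : e ∈ G.edges) (hends : G.ends e = (a, b)) :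
    a ∈ G.verts ∧ b ∈ G.verts := by
  simpa only [hends] using G.wf e he

theorem conn_symm {F : Finset ℕ} {a b : ℕ} (h : G.conn F a b) : G.conn F b a := by
  induction h with
  | refl => exact .refl
  | tail _ hstep ih =>
    obtain ⟨e, he, hends⟩ := hstep
    exact ih.head ⟨e, he, hends.symm⟩

theorem rep_eq_of_conn {F : Finset ℕ} {a b : ℕ} (hb : b ∈ G.verts) (h : G.conn F a b) :
    G.rep F a = G.rep F b := by
  have hclass : (G.verts.filter fun w => G.conn F a w) = G.verts.filter fun w => G.conn F b w :=
    filter_congr fun _ _ => ⟨(G.conn_symm h).trans, h.trans⟩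
  have hne : (G.verts.filter fun w => G.conn F b w).Nonempty := ⟨b, mem_filter.mpr ⟨hb, .refl⟩⟩
  simp only [rep, hclass, dif_pos hne]

theorem conn_rep {F : Finset ℕ} {a : ℕ} (ha : a ∈ G.verts) : G.conn F a (G.rep F a) := by
  have hne : (G.verts.filter fun w => G.conn F a w).Nonempty := ⟨a, mem_filter.mpr ⟨ha, .refl⟩⟩
  have hmem : G.rep F a ∈ G.verts.filter fun w => G.conn F a w := by
    rw [rep, dif_pos hne]
    exact min'_mem _ _
  exact (mem_filter.mp hmem).2

theorem conn_of_rep_eq {F : Finset ℕ} {a b : ℕ} (ha : a ∈ G.verts) (hb : b ∈ G.verts)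
    (h : G.rep F a = G.rep F b) : G.conn F a b :=
  (h ▸ G.conn_rep ha).trans (G.conn_symm (G.conn_rep hb))

theorem conn_filter_rep_eq {F : Finset ℕ} (hF : F ⊆ G.edges) {a b : ℕ} (h : G.conn F a b) :
    G.conn (F.filter fun f => G.rep F (G.ends f).1 = G.rep F a) a b := by
  induction h with
  | refl => exact .refl
  | @tail c d hac hcd ih =>
    obtain ⟨f, hf, hends⟩ := hcd
    have had : G.conn F a d := hac.tail ⟨f, hf, hends⟩
    have hrep : G.rep F (G.ends f).1 = G.rep F a := by
      rcases hends with hends | hends <;> rw [hends]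
      · exact (G.rep_eq_of_conn (G.mem_verts_of_ends_eq (hF hf) hends).1 hac).symm
      · exact (G.rep_eq_of_conn (G.mem_verts_of_ends_eq (hF hf) hends).1 had).symm
    exact ih.tail ⟨f, mem_filter.mpr ⟨hf, hrep⟩, hends⟩

theorem touched_subset_verts (F : Finset ℕ) : G.touched F ⊆ G.verts :=
  filter_subset _ _

theorem touched_mono {F E : Finset ℕ} (h : F ⊆ E) : G.touched F ⊆ G.touched E :=
  fun _ hv ↦ by
    obtain ⟨hv, f, hf, hends⟩ := mem_filter.mp hv
    exact mem_filter.mpr ⟨hv, f, inter_subset_inter_right h hf, hends⟩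

theorem fst_mem_touched {F : Finset ℕ} (hF : F ⊆ G.edges) {e : ℕ} (he : e ∈ F) :
    (G.ends e).1 ∈ G.touched F :=
  mem_filter.mpr ⟨(G.wf e (hF he)).1, e, mem_inter.mpr ⟨he, hF he⟩, .inl rfl⟩

theorem exists_rep_fst_eq_of_mem_touched {E F : Finset ℕ} (hEF : E ⊆ F) {v : ℕ}
    (hv : v ∈ G.touched E) : ∃ f ∈ E, G.rep F (G.ends f).1 = G.rep F v := by
  obtain ⟨hv, f, hf, hends⟩ := mem_filter.mp hv
  have hfE := (mem_inter.mp hf).1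
  refine ⟨f, hfE, G.rep_eq_of_conn hv ?_⟩
  rcases hends with hends | hends
  · exact hends ▸ .refl
  · exact hends ▸ .single ⟨f, hEF hfE, .inl rfl⟩

def Connects (F T : Finset ℕ) : Prop :=
  ∀ a ∈ T, ∀ b ∈ T, G.conn F a b

/-- `card_touched_le` says that the loop number `|F| - |V(F)| + 1` is at least one. -/
structure IsCyclicSub (F : Finset ℕ) : Prop where
  subset : F ⊆ G.edges
  nonempty : F.Nonempty
  connects : G.Connects F (G.touched F)
  card_touched_le : #(G.touched F) ≤ #F

theorem isCyclicSub_filter_rep_eq {F T : Finset ℕ} (hF : F ⊆ G.edges) (hT : G.touched F ⊆ T)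
    {r : ℕ} (hr : r ∈ T.image (G.rep F))
    (hcard : #{v ∈ T | G.rep F v = r} ≤ #{f ∈ F | G.rep F (G.ends f).1 = r}) :
    G.IsCyclicSub {f ∈ F | G.rep F (G.ends f).1 = r} := by
  set E := {f ∈ F | G.rep F (G.ends f).1 = r}
  have hE : E ⊆ F := filter_subset _ _
  have htouched : G.touched E ⊆ {v ∈ T | G.rep F v = r} := fun v hv ↦ by
    obtain ⟨f, hf, hrep⟩ := G.exists_rep_fst_eq_of_mem_touched hE hv
    exact mem_filter.mpr ⟨hT (G.touched_mono hE hv), hrep ▸ (mem_filter.mp hf).2⟩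
  have hne : {v ∈ T | G.rep F v = r}.Nonempty := by
    obtain ⟨v, hv, hvr⟩ := mem_image.mp hr
    exact ⟨v, mem_filter.mpr ⟨hv, hvr⟩⟩
  refine ⟨hE.trans hF, card_pos.mp (hne.card_pos.trans_le hcard), fun a ha b hb ↦ ?_,
    (card_le_card htouched).trans hcard⟩
  have hra := (mem_filter.mp (htouched ha)).2
  have hrb := (mem_filter.mp (htouched hb)).2
  have hab : G.conn F a b := G.conn_of_rep_eq (G.touched_subset_verts E ha)
    (G.touched_subset_verts E hb) (hra.trans hrb.symm)
  have hpath := G.conn_filter_rep_eq hF hab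
  rwa [hra] at hpath

variable {G}

theorem Connects.mono {F T S : Finset ℕ} (h : G.Connects F T) (hST : S ⊆ T) : G.Connects F S :=
  fun a ha b hb ↦ h a (hST ha) b (hST hb)

theorem connects_erase_of_minimal {F : Finset ℕ} (hF : Minimal G.IsCyclicSub F) {e : ℕ}
    (he : e ∈ F) : G.Connects (F.erase e) (G.touched F) := by
  intro a ha b hb
  by_contra hab
  set F' := F.erase e
  have hF' : F' ⊆ G.edges := (erase_subset e F).trans hF.prop.subset
  have hverts := G.touched_subset_verts F
  have htwo : 1 < #((G.touched F).image (G.rep F')) :=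
    one_lt_card.mpr ⟨_, mem_image_of_mem _ ha, _, mem_image_of_mem _ hb,
      fun h ↦ hab (G.conn_of_rep_eq (hverts ha) (hverts hb) h)⟩
  have hcard : #(G.touched F) < #F' + #((G.touched F).image (G.rep F')) := by
    have := hF.prop.card_touched_le
    have := card_pos.mpr ⟨e, he⟩
    rw [card_erase_of_mem he]
    omega
  obtain ⟨r, hr, hfiber⟩ := exists_card_filter_le_card_filter _ _ _ _
    (fun f hf ↦ mem_image_of_mem _ (G.fst_mem_touched hF.prop.subset (mem_of_mem_erase hf)))
    hcard
  exact hF.not_prop_of_lt ((filter_subset _ _).trans_ssubset (erase_ssubset he))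
    (G.isCyclicSub_filter_rep_eq hF' (G.touched_mono (erase_subset e F)) hr hfiber)

theorem card_le_card_touched_of_minimal {F : Finset ℕ} (hF : Minimal G.IsCyclicSub F) :
    #F ≤ #(G.touched F) := by
  by_contra! hlt
  obtain ⟨e, he⟩ := hF.prop.nonempty
  have hsub : G.touched (F.erase e) ⊆ G.touched F := G.touched_mono (erase_subset e F)
  have hpos := card_pos.mpr ⟨_, G.fst_mem_touched hF.prop.subset he⟩
  refine hF.not_prop_of_lt (erase_ssubset he) ⟨(erase_subset e F).trans hF.prop.subset,
    ?_, (connects_erase_of_minimal hF he).mono hsub, ?_⟩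
  · rw [← card_pos, card_erase_of_mem he]
    omega
  · rw [card_erase_of_mem he]
    exact (card_le_card hsub).trans (by omega)

theorem component_eq_restrict {F : Finset ℕ} (hF : F ⊆ G.edges)
    (hconn : G.Connects F (G.touched F)) {v : ℕ} (hv : v ∈ G.touched F) :
    G.component F v = G.restrict F := by
  have hcomp : G.compEdges F v = F := by
    rw [compEdges, inter_eq_left.mpr hF]
    exact filter_true_of_mem fun f hf ↦ hconn v hv _ (G.fst_mem_touched hF hf)
  rw [component, hcomp]

theorem onePI_restrict {F : Finset ℕ} (hF : F ⊆ G.edges) (hne : F.Nonempty)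
    (hconn : G.Connects F (G.touched F))
    (hbridge : ∀ e ∈ F, G.Connects (F.erase e) (G.touched F)) : (G.restrict F).OnePI := by
  have hedges : (G.restrict F).edges = F := inter_eq_left.mpr hF
  refine ⟨?_, hedges.symm ▸ hne, fun e he ↦ ?_⟩
  · show G.Connects (F ∩ G.edges) (G.touched F)
    rwa [inter_eq_left.mpr hF]
  · show G.Connects ((F ∩ G.edges).erase e) (G.touched F)
    rw [hedges] at he
    rw [inter_eq_left.mpr hF]
    exact hbridge e he

theorem goodSub_of_minimal {F : Finset ℕ} (hF : Minimal G.IsCyclicSub F)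
    (hcard : #G.verts < #G.edges) : G.GoodSub F := by
  obtain ⟨hsub, hne, hconn, -⟩ := hF.prop
  refine ⟨hsub, hne, fun hF_eq ↦ ?_, fun v hv ↦ ?_⟩
  · have hle := (card_le_card_touched_of_minimal hF).trans (card_le_card (G.touched_subset_verts F))
    rw [hF_eq] at hle
    omega
  · rw [component_eq_restrict hsub hconn hv]
    exact onePI_restrict hsub hne hconn fun e he ↦ connects_erase_of_minimal hF he

theorem isCyclicSub_edges (hG : G.Connected) (hcard : #G.verts < #G.edges) :
    G.IsCyclicSub G.edges where
  subset := subset_rfl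
  nonempty := card_pos.mp (by omega)
  connects := (show G.Connects G.edges G.verts from hG).mono (G.touched_subset_verts _)
  card_touched_le := (card_le_card (G.touched_subset_verts _)).trans hcard.le

theorem exists_goodSub (hG : G.Connected) (hcard : #G.verts < #G.edges) : ∃ F, G.GoodSub F := by
  obtain ⟨F, -, hF⟩ := exists_minimal_le_of_wellFoundedLT _ _ (isCyclicSub_edges hG hcard)
  exact ⟨F, goodSub_of_minimal hF hcard⟩

theorem mem_subFinset {F : Finset ℕ} : F ∈ G.subFinset ↔ G.GoodSub F := by
  rw [subFinset, mem_filter, mem_powerset]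
  exact ⟨And.right, fun h ↦ ⟨h.1, h⟩⟩

end FeynGraph

open MvPolynomial in
theorem coreCoproduct_X (Γ : FeynGraph) :
    coreCoproduct (X Γ) = X Γ ⊗ₜ[ℂ] 1 + 1 ⊗ₜ[ℂ] X Γ +
      ∑ F ∈ Γ.subFinset, subPoly Γ F ⊗ₜ[ℂ] (X (Γ.contract F) : CoreAlg) :=
  aeval_X _ _

open MvPolynomial in
theorem sum_subPoly_tmul_ne_zero {Γ : FeynGraph} (h : Γ.subFinset.Nonempty) :
    ∑ F ∈ Γ.subFinset, subPoly Γ F ⊗ₜ[ℂ] (X (Γ.contract F) : CoreAlg) ≠ 0 := by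
  intro hzero
  let ev : CoreAlg →ₐ[ℂ] ℂ := aeval fun _ : FeynGraph ↦ (1 : ℂ)
  -- evaluating every graph at `1` sends the sum to the number of its terms
  have hcount := congrArg (Algebra.TensorProduct.lift ev ev fun _ _ ↦ .all _ _) hzero
  simp only [subPoly, map_sum, Algebra.TensorProduct.lift_tmul, map_prod, aeval_X, prod_const_one,
    mul_one, sum_const, nsmul_eq_mul, map_zero, Nat.cast_eq_zero, card_eq_zero, ev] at hcount
  exact h.ne_empty hcount

open MvPolynomial in
/-- Every primitive generator of the core Hopf algebra has exactly
one loop: a 1PI graph `Γ` with loop number `L(Γ) = I - V + 1 ≥ 2` contains a proper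
nonempty 1PI subgraph, hence has nonvanishing reduced coproduct. -/
theorem primitive_has_one_loop (Γ : FeynGraph) (hΓ : Γ.OnePI)
    (hL : 2 ≤ (Γ.edges.card : ℤ) - (Γ.verts.card : ℤ) + 1) :
    Γ.subFinset.Nonempty ∧
      coreCoproduct (X Γ) ≠ (X Γ) ⊗ₜ[ℂ] 1 + 1 ⊗ₜ[ℂ] (X Γ) := by
  obtain ⟨F, hF⟩ := Γ.exists_goodSub hΓ.1 (by omega)
  have hsub : Γ.subFinset.Nonempty := ⟨F, Γ.mem_subFinset.mpr hF⟩
  refine ⟨hsub, fun h ↦ sum_subPoly_tmul_ne_zero hsub ?_⟩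
  rw [coreCoproduct_X] at h
  exact add_eq_left.mp h
end
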